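/- arXiv:1308.0790 — 2 statements merged into one kernel-verified Lean document; each statement's English description precedes it below -/
import Mathlib

section
/- Let ι be a finite type, π a permutation of ι, and a : ι → ℚ a function with |a(i)| ≥ 2 for all i. If z : ι → ℚ satisfies z(i) = a(i) * z(π(i)) for all i ∈ ι, then z(i) = 0 for all i. -/
/-! A maximal `|z m|` is attained since `ι` is finite. Writing `m = π j`, the relation gives
`|z j| = |a j| * |z m|`, which exceeds `|z m|` unless `z m = 0`; so the maximum is `0`. -/

theorem eq_zero_of_eq_mul_comp_of_surjective {ι K : Type*} [Finite ι] [Ring K] [LinearOrder K]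
    [IsStrictOrderedRing K] {π : ι → ι} (hπ : Function.Surjective π) {a z : ι → K}
    (ha : ∀ i, 1 < |a i|) (hz : ∀ i, z i = a i * z (π i)) : z = 0 := by
  funext i
  have : Nonempty ι := ⟨i⟩
  obtain ⟨m, hm⟩ := Finite.exists_max fun i => |z i|
  obtain ⟨j, rfl⟩ := hπ m
  have hmax_zero : |z (π j)| = 0 := by
    refine le_antisymm ?_ (abs_nonneg _)
    by_contra! hpos
    have : |z (π j)| < |z j| :=
      calc |z (π j)| = 1 * |z (π j)| := (one_mul _).symm
        _ < |a j| * |z (π j)| := mul_lt_mul_of_pos_right (ha j) hpos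
        _ = |z j| := by rw [hz j, abs_mul]
    exact (hm j).not_gt this
  exact abs_nonpos_iff.mp (hmax_zero ▸ hm i)

theorem stmt_1 {ι : Type*} [Fintype ι] (π : Equiv.Perm ι) (a : ι → ℚ)
    (ha : ∀ i, 2 ≤ |a i|) (z : ι → ℚ)
    (hz : ∀ i, z i = a i * z (π i)) :
    ∀ i, z i = 0 :=
  congr_fun <| eq_zero_of_eq_mul_comp_of_surjective π.surjective
    (fun i => one_lt_two.trans_le (ha i)) hz
end

section
/- Let H and Δ be groups, r : Δ → Aut(H) an action, Γ a subgroup of H such that r(δ)(Γ) ⊆ Γ for all δ ∈ Δ, and φ : Γ → Δ a group homomorphism satisfying: (i) φ(r(δ)(γ)) = δ φ(γ) δ⁻¹ for all δ ∈ Δ, γ ∈ Γ (Δ-equivariance), and (ii) r(φ(γ))(h) = γ h γ⁻¹ for all γ ∈ Γ, h ∈ H. Then the image of the injective homomorphism ψ : Γ → H ⋊_r Δ, ψ(γ) = (γ⁻¹, φ(γ)), is a normal subgroup of H ⋊_r Δ. -/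
namespace SemidirectProduct

variable {N G : Type*} [Group N] [Group G] {φ : G →* MulAut N}

/-- `⟨n⁻¹, g⟩` centralizes `N` when `g` acts as conjugation by `n`, so conjugating it by `x`
only sees the `G`-component of `x`. -/
theorem mul_mk_inv_mul_inv_of_eq_conj {n : N} {g : G} (hg : φ g = MulAut.conj n)
    (x : N ⋊[φ] G) :
    x * ⟨n⁻¹, g⟩ * x⁻¹ = ⟨φ x.right n⁻¹, x.right * g * x.right⁻¹⟩ := by
  ext
  · simp [hg, mul_assoc]
  · simp [mul_assoc]

end SemidirectProduct

theorem stmt_9 {H Δ : Type*} [Group H] [Group Δ] (r : Δ →* MulAut H)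
    (Γ : Subgroup H) (φ : Γ →* Δ)
    (hstab : ∀ (δ : Δ) (γ : Γ), r δ (γ : H) ∈ Γ)
    (hequiv : ∀ (δ : Δ) (γ : Γ), φ ⟨r δ (γ : H), hstab δ γ⟩ = δ * φ γ * δ⁻¹)
    (hφ : ∀ (γ : Γ) (h : H), r (φ γ) h = (γ : H) * h * (γ : H)⁻¹)
    (ψ : Γ →* SemidirectProduct H Δ r)
    (hψ : ∀ γ : Γ, ψ γ = ⟨(γ : H)⁻¹, φ γ⟩) :
    ψ.range.Normal := by
  refine ⟨?_⟩
  rintro _ ⟨γ, rfl⟩ x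
  have hconj : r (φ γ) = MulAut.conj (γ : H) := MulEquiv.ext (hφ γ)
  refine ⟨⟨r x.right γ, hstab x.right γ⟩, ?_⟩
  rw [hψ, hψ, hequiv, SemidirectProduct.mul_mk_inv_mul_inv_of_eq_conj hconj, map_inv]
end
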